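/- Let R be a commutative Noetherian ring such that every finitely generated reflexive R-module is self-dual. Then a finitely generated R-module M is 3-torsionfree if and only if M is totally reflexive. -/

import Mathlib

open CategoryTheory

universe u

variable (R : Type u) [CommRing R]

/-- Vanishing of `Ext_R^i(M, N)`. -/
def ExtVanishes (M N : Type u) [AddCommGroup M] [Module R M] [AddCommGroup N] [Module R N]
    (i : ℕ) : Prop :=
  Subsingleton (((Ext R (ModuleCat.{u} R) i).obj (Opposite.op (ModuleCat.of R M))).obj
    (ModuleCat.of R N))

/-- `M` is self-dual: `M ≅ M^* = Hom_R(M, R)`. -/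
def IsSelfDual (M : Type u) [AddCommGroup M] [Module R M] : Prop :=
  Nonempty (M ≃ₗ[R] (M →ₗ[R] R))

/-- `M` is `n`-torsionfree: for some (equivalently, any) finite free presentation
`F₁ → F₀ → M → 0` given by a matrix `A`, the Auslander transpose `Tr M`, i.e. the
cokernel of the dualized map (given by the transposed matrix `Aᵀ`), satisfies
`Ext_R^i(Tr M, R) = 0` for `i = 1, …, n`. -/
def IsNTorsionfree (n : ℕ) (M : Type u) [AddCommGroup M] [Module R M] : Prop :=
  ∃ (p q : ℕ) (A : Matrix (Fin p) (Fin q) R),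
    Nonempty (M ≃ₗ[R] ((Fin p → R) ⧸ LinearMap.range (Matrix.toLin' A))) ∧
    ∀ i, 1 ≤ i → i ≤ n →
      ExtVanishes R ((Fin q → R) ⧸ LinearMap.range (Matrix.toLin' A.transpose)) R i

/-- `M` is totally reflexive (Gorenstein projective): `M` is reflexive and
`Ext_R^i(M, R) = Ext_R^i(M^*, R) = 0` for all `i > 0`. -/
def IsTotallyReflexive (M : Type u) [AddCommGroup M] [Module R M] : Prop :=
  Module.IsReflexive R M ∧ (∀ i, 0 < i → ExtVanishes R M R i) ∧
    (∀ i, 0 < i → ExtVanishes R (M →ₗ[R] R) R i)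

/-- `N` is a syzygy `Ω M` of `M`: the kernel of a surjection `P → M` with `P`
finitely generated projective. -/
def IsSyzygyOf (N M : Type u) [AddCommGroup N] [Module R N] [AddCommGroup M] [Module R M] :
    Prop :=
  ∃ (P : Type u) (_ : AddCommGroup P) (_ : Module R P) (g : P →ₗ[R] M),
    Module.Projective R P ∧ Module.Finite R P ∧ Function.Surjective g ∧
      Nonempty (N ≃ₗ[R] LinearMap.ker g)

/-- `N` is an `n`-th syzygy `Ωⁿ M` of `M`. -/
def IsNthSyzygyOf (n : ℕ) (N M : Type u) [AddCommGroup N] [Module R N]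
    [AddCommGroup M] [Module R M] : Prop :=
  match n with
  | 0 => Nonempty (N ≃ₗ[R] M)
  | n + 1 => ∃ (K : Type u) (_ : AddCommGroup K) (_ : Module R K),
      IsSyzygyOf R K M ∧ IsNthSyzygyOf n N K

/-- Every finitely generated reflexive `R`-module is self-dual (property (sd)). -/
def SDProperty : Prop :=
  ∀ (M : Type u) (_ : AddCommGroup M) (_ : Module R M),
    Module.Finite R M → Module.IsReflexive R M → IsSelfDual R M

/-- The depth of a Noetherian local ring is at least `t`: there is an `R`-regular
sequence of length `t` inside the maximal ideal. -/
def DepthGE [IsLocalRing R] (t : ℕ) : Prop :=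
  ∃ rs : List R, rs.length = t ∧ (∀ r ∈ rs, r ∈ IsLocalRing.maximalIdeal R) ∧
    RingTheory.Sequence.IsRegular R rs

/-- The depth of a Noetherian local ring is at most `t`: every `R`-regular sequence
inside the maximal ideal has length at most `t`. -/
def DepthLE [IsLocalRing R] (t : ℕ) : Prop :=
  ∀ rs : List R, (∀ r ∈ rs, r ∈ IsLocalRing.maximalIdeal R) →
    RingTheory.Sequence.IsRegular R rs → rs.length ≤ t

/-- A local ring is Gorenstein if it has finite injective dimension over itself,
equivalently there is `n` such that `Ext_R^i(N, R) = 0` for all modules `N` and all `i > n`. -/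
def IsGorensteinLocalRing : Prop :=
  ∃ n : ℕ, ∀ (N : Type u) (_ : AddCommGroup N) (_ : Module R N), ∀ i, n < i →
    ExtVanishes R N R i

/-!
Read off a presentation `P₁ → P₀ → M → 0`, the vanishing of `Ext¹` and `Ext²` of `Tr M` says
that `M → M**` is injective and surjective, and `Ext³(Tr M, R) ≅ Ext¹(M*, R)` by dimension
shifting along `0 → M* → P₀* → P₁* → Tr M → 0`. So `M` is 3-torsionfree iff it is reflexive
with `Ext¹(M*, R) = 0`.

Under (sd), a finitely generated reflexive `X` with `Ext¹(X*, R) = 0` has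
`Ext¹(X, R) ≅ Ext¹(X*, R) = 0`. For a syzygy `0 → K → F → X → 0` this makes the dual sequence
`0 → X* → F* → K* → 0` exact; then `K` is reflexive, `Ext¹(K*, R) = 0` because `X` is reflexive,
and `Ext^{i+2}(X, R) ≅ Ext^{i+1}(K, R)` vanishes by induction. Applied to `M` and to `M* ≅ M**`
this gives total reflexivity.
-/

section ProjectiveResolution

open Limits

variable {C : Type*} [Category C] [Abelian C]

namespace CategoryTheory.ShortComplex

theorem Exact.epi_comp_f {S : ShortComplex C} (hS : S.Exact) {X : C} (p : X ⟶ S.X₁) [Epi p] :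
    (ShortComplex.mk (p ≫ S.f) S.g (by simp)).Exact :=
  let φ : ShortComplex.mk (p ≫ S.f) S.g (by simp) ⟶ S := { τ₁ := p, τ₂ := 𝟙 _, τ₃ := 𝟙 _ }
  have : Epi φ.τ₁ := ‹Epi p›
  (exact_iff_of_epi_of_isIso_of_mono φ).2 hS

theorem Exact.g_comp_mono {S : ShortComplex C} (hS : S.Exact) {Y : C} (i : S.X₃ ⟶ Y) [Mono i] :
    (ShortComplex.mk S.f (S.g ≫ i) (by simp)).Exact :=
  let φ : S ⟶ ShortComplex.mk S.f (S.g ≫ i) (by simp) := { τ₁ := 𝟙 _, τ₂ := 𝟙 _, τ₃ := i }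
  have : Mono φ.τ₃ := ‹Mono i›
  (exact_iff_of_epi_of_isIso_of_mono φ).1 hS

end CategoryTheory.ShortComplex

namespace CategoryTheory.ProjectiveResolution

section Augmentation

variable {Z : C} (Q : ProjectiveResolution Z)

noncomputable def augmentation : Q.complex.X 0 ⟶ Z :=
  (Q.complex.toSingle₀Equiv Z Q.π).1

theorem d_comp_augmentation : Q.complex.d 1 0 ≫ Q.augmentation = 0 :=
  (Q.complex.toSingle₀Equiv Z Q.π).2

instance : Epi Q.augmentation :=
  inferInstanceAs (Epi (Q.π.f 0))

theorem exact_augmentation : (ShortComplex.mk _ _ Q.d_comp_augmentation).Exact :=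
  Q.exact₀

end Augmentation

noncomputable def ofShortExact {S : ShortComplex C} (hS : S.ShortExact) [Projective S.X₂]
    (Q : ProjectiveResolution S.X₁) : ProjectiveResolution S.X₃ where
  complex := Q.complex.augment (Q.augmentation ≫ S.f)
    (by rw [← Category.assoc, Q.d_comp_augmentation, zero_comp])
  projective n := by cases n <;> dsimp [ChainComplex.augment] <;> infer_instance
  π := (ChainComplex.toSingle₀Equiv _ _).symm ⟨S.g,
    (Category.assoc _ _ _).trans ((congrArg _ S.zero).trans comp_zero)⟩
  quasiIso := ⟨fun n => by
    have := hS.mono_f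
    rcases n with _ | _ | n
    · rw [ChainComplex.quasiIsoAt₀_iff, ShortComplex.quasiIso_iff_of_zeros']
      -- the degree-0 short complex is `Q.augmentation ≫ S.f, S.g` only up to unfolding `augment`
      · refine (ShortComplex.exact_and_epi_g_iff_of_iso
          (S₂ := ShortComplex.mk (Q.augmentation ≫ S.f) S.g
            ((Category.assoc _ _ _).trans ((congrArg _ S.zero).trans comp_zero))) ?_).2
          ⟨hS.exact.epi_comp_f Q.augmentation, hS.epi_g⟩
        exact ShortComplex.isoMk (Iso.refl _) (Iso.refl _) (Iso.refl _)
          ((Category.id_comp _).trans (Category.comp_id _).symm)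
          ((Category.id_comp S.g).trans ((ChainComplex.toSingle₀Equiv_symm_apply_f_zero
            (C := Q.complex.augment _ _) S.g _).symm.trans (Category.comp_id _).symm))
      all_goals rfl
    · rw [quasiIsoAt_iff_exactAt' _ _ (ChainComplex.exactAt_succ_single_obj _ _),
        HomologicalComplex.exactAt_iff' _ 2 1 0 (by simp) (by simp)]
      exact Q.exact_augmentation.g_comp_mono S.f
    · rw [quasiIsoAt_iff_exactAt' _ _ (ChainComplex.exactAt_succ_single_obj _ _),
        HomologicalComplex.exactAt_iff' _ (n + 3) (n + 2) (n + 1) (by simp) (by simp)]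
      have := Q.complex_exactAt_succ n
      rwa [HomologicalComplex.exactAt_iff' _ (n + 2) (n + 1) n (by simp) (by simp)] at this⟩

end CategoryTheory.ProjectiveResolution

namespace CategoryTheory

variable {A : Type*} [Ring A] [Linear A C] [EnoughProjectives C]

theorem ProjectiveResolution.subsingleton_ext_succ_iff {X : C} (P : ProjectiveResolution X)
    (Y : C) (n : ℕ) :
    Subsingleton (((Ext A C (n + 1)).obj (Opposite.op X)).obj Y) ↔
      ∀ f : P.complex.X (n + 1) ⟶ Y, P.complex.d (n + 2) (n + 1) ≫ f = 0 →
        ∃ g : P.complex.X n ⟶ Y, P.complex.d (n + 1) n ≫ g = f := by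
  rw [← ModuleCat.isZero_iff_subsingleton, Iso.isZero_iff (P.isoExt (n + 1) Y),
    ← HomologicalComplex.exactAt_iff_isZero_homology,
    HomologicalComplex.exactAt_iff' _ n (n + 1) (n + 2) (by simp) (by simp),
    ShortComplex.moduleCat_exact_iff]
  rfl

variable {S : ShortComplex C} [Projective S.X₂] (Y : C)

theorem ShortComplex.ShortExact.subsingleton_ext_one_iff (hS : S.ShortExact) :
    Subsingleton (((Ext A C 1).obj (Opposite.op S.X₃)).obj Y) ↔
      ∀ f : S.X₁ ⟶ Y, ∃ g : S.X₂ ⟶ Y, S.f ≫ g = f := by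
  set Q := ProjectiveResolution.of S.X₁
  rw [(ProjectiveResolution.ofShortExact hS Q).subsingleton_ext_succ_iff Y 0]
  constructor
  · intro h f
    obtain ⟨g, hg⟩ := h (Q.augmentation ≫ f)
      (((Category.assoc _ _ _).symm.trans
        (congrArg (· ≫ f) Q.d_comp_augmentation)).trans zero_comp)
    exact ⟨g, (cancel_epi Q.augmentation).1 ((Category.assoc _ _ _).symm.trans hg)⟩
  · intro h f hf
    obtain ⟨f', hf'⟩ := CokernelCofork.IsColimit.desc' Q.isColimitCokernelCofork f hf
    obtain ⟨g, hg⟩ := h f'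
    exact ⟨g, (Category.assoc _ _ _).trans ((congrArg _ hg).trans hf')⟩

theorem ShortComplex.ShortExact.subsingleton_ext_add_two_iff (hS : S.ShortExact) (n : ℕ) :
    Subsingleton (((Ext A C (n + 2)).obj (Opposite.op S.X₃)).obj Y) ↔
      Subsingleton (((Ext A C (n + 1)).obj (Opposite.op S.X₁)).obj Y) := by
  set Q := ProjectiveResolution.of S.X₁
  rw [(ProjectiveResolution.ofShortExact hS Q).subsingleton_ext_succ_iff Y (n + 1),
    Q.subsingleton_ext_succ_iff Y n]
  -- in degrees `≥ 1`, `ofShortExact hS Q` is `Q` shifted by one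
  rfl

end CategoryTheory

end ProjectiveResolution

section ExtVanishes

variable {R}

theorem extVanishes_congr {M M' : Type u} [AddCommGroup M] [Module R M] [AddCommGroup M']
    [Module R M'] (e : M ≃ₗ[R] M') (N : Type u) [AddCommGroup N] [Module R N] (i : ℕ) :
    ExtVanishes R M N i ↔ ExtVanishes R M' N i := by
  simp only [ExtVanishes, ← ModuleCat.isZero_iff_subsingleton]
  exact Iso.isZero_iff (((Ext R _ i).mapIso e.toModuleIso.symm.op).app _)

variable {K P X : Type u} (N : Type u) [AddCommGroup K] [Module R K] [AddCommGroup P] [Module R P]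
  [AddCommGroup X] [Module R X] [AddCommGroup N] [Module R N] [Module.Projective R P]
  {u : K →ₗ[R] P} {p : P →ₗ[R] X}

theorem extVanishes_one_iff_of_exact (hu : Function.Injective u) (hp : Function.Surjective p)
    (hup : Function.Exact u p) :
    ExtVanishes R X N 1 ↔ ∀ f : K →ₗ[R] N, ∃ g : P →ₗ[R] N, g ∘ₗ u = f := by
  have hS := ModuleCat.shortComplex_shortExact
    (ModuleCat.shortComplexOfCompEqZero u p hup.linearMap_comp_eq_zero) hup hu hp
  refine (hS.subsingleton_ext_one_iff (ModuleCat.of R N)).trans ⟨fun h f => ?_, fun h f => ?_⟩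
  · obtain ⟨g, hg⟩ := h (ModuleCat.ofHom f)
    exact ⟨g.hom, congrArg ModuleCat.Hom.hom hg⟩
  · obtain ⟨g, hg⟩ := h f.hom
    exact ⟨ModuleCat.ofHom g, ModuleCat.hom_ext hg⟩

theorem extVanishes_add_two_iff_of_exact (hu : Function.Injective u) (hp : Function.Surjective p)
    (hup : Function.Exact u p) (i : ℕ) :
    ExtVanishes R X N (i + 2) ↔ ExtVanishes R K N (i + 1) :=
  (ModuleCat.shortComplex_shortExact (ModuleCat.shortComplexOfCompEqZero u p
    hup.linearMap_comp_eq_zero) hup hu hp).subsingleton_ext_add_two_iff (ModuleCat.of R N) i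

end ExtVanishes

section Dual

open Module

variable {R} {M₁ M₂ M₃ : Type*} [AddCommGroup M₁] [Module R M₁] [AddCommGroup M₂] [Module R M₂]
  [AddCommGroup M₃] [Module R M₃] {f : M₁ →ₗ[R] M₂} {g : M₂ →ₗ[R] M₃}

theorem Function.Exact.dualMap (h : Function.Exact f g) (hg : Function.Surjective g) :
    Function.Exact g.dualMap f.dualMap := by
  rw [LinearMap.exact_iff, LinearMap.ker_dualMap_eq_dualAnnihilator_range,
    LinearMap.range_dualMap_eq_dualAnnihilator_ker_of_surjective g hg, h.linearMap_ker_eq]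

theorem Function.Exact.dualMap_rangeRestrict (h : Function.Exact f g)
    (hg : Function.Surjective g) : Function.Exact g.dualMap f.dualMap.rangeRestrict := by
  rw [LinearMap.exact_iff, LinearMap.ker_rangeRestrict, ← LinearMap.exact_iff]
  exact h.dualMap hg

theorem LinearMap.surjective_dualMap_dualMap_iff [IsReflexive R M₁] (hf : Function.Surjective f) :
    Function.Surjective f.dualMap.dualMap ↔ Function.Surjective (Dual.eval R M₂) := by
  rw [← Function.Surjective.of_comp_iff _ (bijective_dual_eval R M₁).2,
    ← Function.Surjective.of_comp_iff _ hf, ← LinearMap.coe_comp, ← LinearMap.coe_comp,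
    Dual.eval_naturality]

theorem isReflexive_of_exact [IsReflexive R M₂] (hf : Function.Injective f)
    (hfg : Function.Exact f g) (hg : Function.Injective (Dual.eval R M₃))
    (hf' : Function.Surjective f.dualMap) : IsReflexive R M₁ := by
  have hnat := congrArg DFunLike.coe (Dual.eval_naturality f)
  have hinj : Function.Injective f.dualMap.dualMap := LinearMap.dualMap_injective_of_surjective hf'
  refine ⟨⟨Function.Injective.of_comp (f := f.dualMap.dualMap) ?_, fun Φ => ?_⟩⟩
  · rw [← LinearMap.coe_comp, hnat, LinearMap.coe_comp]
    exact (bijective_dual_eval R M₂).1.comp hf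
  obtain ⟨x, hx⟩ := (bijective_dual_eval R M₂).2 (f.dualMap.dualMap Φ)
  have hgx : g x = 0 := hg <| LinearMap.ext fun ψ => by
    simpa [LinearMap.dualMap_apply', LinearMap.comp_assoc, hfg.linearMap_comp_eq_zero]
      using LinearMap.congr_fun hx (ψ ∘ₗ g)
  obtain ⟨y, rfl⟩ := (hfg x).1 hgx
  exact ⟨y, hinj ((congrFun hnat y).trans hx)⟩

end Dual

section AuslanderTranspose

open Module

variable {R} {P₀ P₁ M : Type u} [AddCommGroup P₀] [Module R P₀] [AddCommGroup P₁] [Module R P₁]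
  [AddCommGroup M] [Module R M]

abbrev AuslanderTranspose (φ : P₁ →ₗ[R] P₀) : Type u :=
  Dual R P₁ ⧸ LinearMap.range φ.dualMap

variable [Module.Projective R P₀] [Module.Finite R P₀] [Module.Projective R P₁] [Module.Finite R P₁]
  {φ : P₁ →ₗ[R] P₀} {π : P₀ →ₗ[R] M}

theorem extVanishes_auslanderTranspose_one_iff (hπ : Function.Surjective π)
    (hφπ : Function.Exact φ π) :
    ExtVanishes R (AuslanderTranspose φ) R 1 ↔ Function.Injective (Dual.eval R M) := by
  rw [extVanishes_one_iff_of_exact R (LinearMap.range φ.dualMap).injective_subtype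
    (Submodule.mkQ_surjective _) (LinearMap.exact_subtype_mkQ _)]
  have hρ := LinearMap.surjective_rangeRestrict φ.dualMap
  -- `M₃` is given explicitly: otherwise unifying the two module structures on the range times out
  have hexact :=
    Function.Exact.dualMap (M₃ := LinearMap.range φ.dualMap) (hφπ.dualMap_rangeRestrict hπ) hρ
  constructor
  · intro hι
    rw [injective_iff_map_eq_zero]
    intro m hm
    obtain ⟨x, rfl⟩ := hπ m
    obtain ⟨f, hf⟩ := (hexact (Dual.eval R P₀ x)).1 hm
    obtain ⟨g, rfl⟩ := hι f
    obtain ⟨y, rfl⟩ := (bijective_dual_eval R P₁).2 g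
    obtain rfl : φ y = x := (bijective_dual_eval R P₀).1 hf
    exact hφπ.apply_apply_eq_zero y
  · intro hinj f
    obtain ⟨x, hx⟩ := (bijective_dual_eval R P₀).2 (φ.dualMap.rangeRestrict.dualMap f)
    obtain ⟨y, rfl⟩ := (hφπ x).1 <| hinj <| by
      rw [map_zero, ← LinearMap.comp_apply, ← Dual.eval_naturality, LinearMap.comp_apply, hx]
      exact hexact.apply_apply_eq_zero f
    refine ⟨Dual.eval R P₁ y, LinearMap.dualMap_injective_of_surjective hρ ?_⟩
    rw [← hx]
    rfl

theorem extVanishes_auslanderTranspose_two_iff (hπ : Function.Surjective π)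
    (hφπ : Function.Exact φ π) :
    ExtVanishes R (AuslanderTranspose φ) R 2 ↔ Function.Surjective (Dual.eval R M) := by
  rw [extVanishes_add_two_iff_of_exact R (LinearMap.range φ.dualMap).injective_subtype
    (Submodule.mkQ_surjective _) (LinearMap.exact_subtype_mkQ _) 0,
    extVanishes_one_iff_of_exact R (LinearMap.dualMap_injective_of_surjective hπ)
    (LinearMap.surjective_rangeRestrict _) (hφπ.dualMap_rangeRestrict hπ)]
  exact LinearMap.surjective_dualMap_dualMap_iff hπ

theorem extVanishes_auslanderTranspose_add_three_iff (hπ : Function.Surjective π)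
    (hφπ : Function.Exact φ π) (i : ℕ) :
    ExtVanishes R (AuslanderTranspose φ) R (i + 3) ↔ ExtVanishes R (Dual R M) R (i + 1) :=
  (extVanishes_add_two_iff_of_exact R (LinearMap.range φ.dualMap).injective_subtype
    (Submodule.mkQ_surjective _) (LinearMap.exact_subtype_mkQ _) (i + 1)).trans
  (extVanishes_add_two_iff_of_exact R (LinearMap.dualMap_injective_of_surjective hπ)
    (LinearMap.surjective_rangeRestrict _) (hφπ.dualMap_rangeRestrict hπ) i)

theorem extVanishes_auslanderTranspose_le_three_iff (hπ : Function.Surjective π)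
    (hφπ : Function.Exact φ π) :
    (∀ i, 1 ≤ i → i ≤ 3 → ExtVanishes R (AuslanderTranspose φ) R i) ↔
      IsReflexive R M ∧ ExtVanishes R (Dual R M) R 1 := by
  have h₁ := extVanishes_auslanderTranspose_one_iff hπ hφπ
  have h₂ := extVanishes_auslanderTranspose_two_iff hπ hφπ
  have h₃ := extVanishes_auslanderTranspose_add_three_iff hπ hφπ 0
  refine ⟨fun h => ⟨⟨⟨h₁.1 (h 1 le_rfl (by norm_num)), h₂.1 (h 2 (by norm_num) (by norm_num))⟩⟩,
    h₃.1 (h 3 (by norm_num) le_rfl)⟩, fun ⟨hM, hM'⟩ i hi₁ hi₃ => ?_⟩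
  interval_cases i
  exacts [h₁.2 (bijective_dual_eval R M).1, h₂.2 (bijective_dual_eval R M).2, h₃.2 hM']

end AuslanderTranspose

section Torsionfree

open Module

variable {R}

theorem Matrix.dualMap_toLin'_comp_dotProductEquiv {p q : ℕ} (A : Matrix (Fin p) (Fin q) R) :
    (Matrix.toLin' A).dualMap ∘ₗ (dotProductEquiv R (Fin p)).toLinearMap =
      (dotProductEquiv R (Fin q)).toLinearMap ∘ₗ Matrix.toLin' A.transpose := by
  ext v w
  simp [LinearMap.dualMap_apply']

noncomputable def Matrix.auslanderTransposeEquiv {p q : ℕ} (A : Matrix (Fin p) (Fin q) R) :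
    AuslanderTranspose (Matrix.toLin' A) ≃ₗ[R]
      (Fin q → R) ⧸ LinearMap.range (Matrix.toLin' A.transpose) :=
  (Submodule.Quotient.equiv _ _ (dotProductEquiv R (Fin q)) <| by
    rw [← LinearMap.range_comp, ← A.dualMap_toLin'_comp_dotProductEquiv, LinearMap.range_comp,
      LinearEquiv.range, Submodule.map_top]).symm

theorem isNTorsionfree_three_iff [IsNoetherianRing R] (M : Type u) [AddCommGroup M] [Module R M]
    [Module.Finite R M] :
    IsNTorsionfree R 3 M ↔ IsReflexive R M ∧ ExtVanishes R (Dual R M) R 1 := by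
  constructor
  · rintro ⟨p, q, A, ⟨e⟩, h⟩
    refine (extVanishes_auslanderTranspose_le_three_iff
      (π := e.symm.toLinearMap ∘ₗ (LinearMap.range (Matrix.toLin' A)).mkQ)
      (e.symm.surjective.comp (Submodule.mkQ_surjective _))
      (e.symm.injective.comp_exact_iff_exact.2 (LinearMap.exact_iff.2 (Submodule.ker_mkQ _)))).1
      fun i hi₁ hi₃ => (extVanishes_congr A.auslanderTransposeEquiv R i).2 (h i hi₁ hi₃)
  · intro hM
    have := Module.finitePresentation_of_finite R M
    obtain ⟨n, m, f, g, hf, hgf⟩ := Module.FinitePresentation.exists_fin' R M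
    have hA : Matrix.toLin' (LinearMap.toMatrix' g) = g := Matrix.toLin'_toMatrix' g
    refine ⟨n, m, LinearMap.toMatrix' g, ⟨(f.quotKerEquivOfSurjective hf).symm ≪≫ₗ
      Submodule.quotEquivOfEq _ _ (by rw [hA, hgf.linearMap_ker_eq])⟩, fun i hi₁ hi₃ => ?_⟩
    exact (extVanishes_congr (LinearMap.toMatrix' g).auslanderTransposeEquiv R i).1
      ((extVanishes_auslanderTranspose_le_three_iff hf (by rwa [hA])).2 hM i hi₁ hi₃)

end Torsionfree

section SelfDual

open Module

variable {R}

theorem IsSelfDual.extVanishes_iff {X : Type u} [AddCommGroup X] [Module R X]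
    (h : IsSelfDual R X) (N : Type u) [AddCommGroup N] [Module R N] (i : ℕ) :
    ExtVanishes R X N i ↔ ExtVanishes R (X →ₗ[R] R) N i :=
  h.elim fun e => extVanishes_congr e N i

variable [IsNoetherianRing R]

theorem extVanishes_succ_of_sd (hsd : SDProperty R) (i : ℕ) (X : Type u) [AddCommGroup X]
    [Module R X] [Module.Finite R X] [IsReflexive R X] (hX : ExtVanishes R (Dual R X) R 1) :
    ExtVanishes R X R (i + 1) := by
  induction i generalizing X with
  | zero => exact ((hsd X _ _ ‹_› ‹_›).extVanishes_iff R 1).2 hX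
  | succ i ih =>
    obtain ⟨k, f, hf⟩ := Module.Finite.exists_fin' R X
    have hexact := LinearMap.exact_subtype_ker_map f
    have hinj := (LinearMap.ker f).injective_subtype
    have hres : Function.Surjective (LinearMap.ker f).subtype.dualMap :=
      (extVanishes_one_iff_of_exact R hinj hf hexact).1
        (((hsd X _ _ ‹_› ‹_›).extVanishes_iff R 1).2 hX)
    have : IsReflexive R (LinearMap.ker f) :=
      isReflexive_of_exact hinj hexact (bijective_dual_eval R X).1 hres
    have hK : ExtVanishes R (Dual R (LinearMap.ker f)) R 1 :=
      (extVanishes_one_iff_of_exact R (LinearMap.dualMap_injective_of_surjective hf) hres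
        (hexact.dualMap hf)).2
        ((LinearMap.surjective_dualMap_dualMap_iff hf).2 (bijective_dual_eval R X).2)
    exact (extVanishes_add_two_iff_of_exact R hinj hf hexact i).2 (ih _ hK)

theorem isTotallyReflexive_iff_of_sd (hsd : SDProperty R) (M : Type u) [AddCommGroup M]
    [Module R M] [Module.Finite R M] :
    IsTotallyReflexive R M ↔ IsReflexive R M ∧ ExtVanishes R (Dual R M) R 1 := by
  refine ⟨fun h => ⟨h.1, h.2.2 1 one_pos⟩, fun ⟨hM, hM'⟩ => ⟨hM, fun i hi => ?_, fun i hi => ?_⟩⟩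
  · obtain ⟨j, rfl⟩ := Nat.exists_eq_add_one_of_ne_zero hi.ne'
    exact extVanishes_succ_of_sd hsd j M hM'
  · obtain ⟨j, rfl⟩ := Nat.exists_eq_add_one_of_ne_zero hi.ne'
    exact extVanishes_succ_of_sd hsd j (Dual R M)
      ((extVanishes_congr (evalEquiv R M) R 1).1 (extVanishes_succ_of_sd hsd 0 M hM'))

end SelfDual

/-- Over a commutative Noetherian ring with property (sd), a finitely generated module
is 3-torsionfree iff it is totally reflexive. -/
theorem threeTorsionfree_iff_totallyReflexive_of_sd
    (R : Type u) [CommRing R] [IsNoetherianRing R] (hsd : SDProperty R)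
    (M : Type u) [AddCommGroup M] [Module R M] [Module.Finite R M] :
    IsNTorsionfree R 3 M ↔ IsTotallyReflexive R M :=
  (isNTorsionfree_three_iff M).trans (isTotallyReflexive_iff_of_sd hsd M).symm
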